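/- Let G be a strongly regular graph with parameters (v, k, a, c) on vertex set {1, …, v}, with 1 ≤ c, 0 < k < v−1. Let A be its adjacency matrix over ℝ, let θ be a real eigenvalue of A with θ ≠ k, let P be the orthogonal projection of ℝ^v onto the eigenspace of A for the eigenvalue θ, and for each vertex x let z_x = P e_x / ‖P e_x‖ be the normalized projection of the standard basis vector e_x (these projections are nonzero). Then Σ_{x=1}^v Σ_{y=1}^v ‖z_x − z_y‖ = v·( √(2k(k−θ)) + √(2(v−1−k)(v+θ−k)) ). -/

import Mathlib

/-!
The adjacency matrix `A` satisfies `A² = (a - c) A + (k - c) I + c J`. On eigenvectors orthogonal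
to the all-ones vector this makes `θ` a root of `x² - (a - c) x - (k - c)`; with `τ` the other
root, `(A - θ)(A - τ) = c J` and hence `(A - θ)(A - k)(A - τ) = 0`. As `A` is symmetric, the
projection onto the `θ`-eigenspace is the Lagrange interpolant `(A - k)(A - τ) / ((θ - k)(θ - τ))`,
whose `(x, y)` entry only depends on whether `x = y`, `x ~ y` or neither. Reading off the cosines
`⟨z_x, z_y⟩ = θ / k` on edges and `-(1 + θ) / (v - k - 1)` on non-edges, `‖z_x - z_y‖` takes
the two values `√(2(k - θ)/k)` and `√(2(v - k + θ)/(v - k - 1))`, and each vertex has `k`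
neighbours and `v - k - 1` non-neighbours.
-/

open Matrix SimpleGraph Finset Module.End

theorem Commute.sub_smul_one_sub_smul_one {R A : Type*} [CommSemiring R] [Ring A] [Algebra R A]
    (a : A) (r s : R) : Commute (a - r • 1) (a - s • 1) :=
  ((Commute.refl a).sub_right ((Commute.one_right a).smul_right s)).sub_left
    (((Commute.one_left a).smul_left r).sub_right
      (((Commute.one_left 1).smul_left r).smul_right s))

theorem Finset.sum_eq_sqrt_of_card_mul_sq_eq {ι : Type*} {s : Finset ι} {f : ι → ℝ} {t : ℝ}
    (hf : ∀ i ∈ s, 0 ≤ f i) (h : ∀ i ∈ s, #s * f i ^ 2 = t) : ∑ i ∈ s, f i = √(#s * t) := by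
  obtain rfl | ⟨i, hi⟩ := s.eq_empty_or_nonempty
  · simp
  have hs : (#s : ℝ) ≠ 0 := by exact_mod_cast (Finset.card_pos.2 ⟨i, hi⟩).ne'
  have hconst : ∀ j ∈ s, f j = f i := fun j hj =>
    (sq_eq_sq₀ (hf j hj) (hf i hi)).1 (mul_left_cancel₀ hs ((h j hj).trans (h i hi).symm))
  rw [Finset.sum_congr rfl hconst, Finset.sum_const, nsmul_eq_mul, ← h i hi, ← mul_assoc, ← sq,
    ← mul_pow, Real.sqrt_sq (mul_nonneg (Nat.cast_nonneg _) (hf i hi))]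

namespace Submodule

variable {𝕜 E : Type*} [RCLike 𝕜] [NormedAddCommGroup E] [InnerProductSpace 𝕜 E]

theorem starProjection_eq_of_isSymmetric (K : Submodule 𝕜 E) [K.HasOrthogonalProjection]
    {T : E →ₗ[𝕜] E} (hT : T.IsSymmetric) (hmem : ∀ x, T x ∈ K) (hfix : ∀ w ∈ K, T w = w)
    (x : E) : K.starProjection x = T x :=
  eq_starProjection_of_mem_of_inner_eq_zero (hmem x) fun w hw => by
    rw [inner_sub_left, hT, hfix w hw, sub_self]

theorem inner_starProjection_starProjection (K : Submodule 𝕜 E) [K.HasOrthogonalProjection]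
    (x y : E) :
    inner 𝕜 (K.starProjection x) (K.starProjection y) = inner 𝕜 x (K.starProjection y) := by
  rw [inner_starProjection_left_eq_right,
    starProjection_eq_self_iff.2 (starProjection_apply_mem K y)]

end Submodule

section
variable {E : Type*} [NormedAddCommGroup E] [InnerProductSpace ℝ E]

theorem mul_norm_inv_smul_sub_inv_smul_sq {p q : E} (hp : p ≠ 0) (hpq : ‖p‖ = ‖q‖) {m ω : ℝ}
    (h : m * inner ℝ p q = ω * ‖p‖ ^ 2) :
    m * ‖‖p‖⁻¹ • p - ‖q‖⁻¹ • q‖ ^ 2 = 2 * (m - ω) := by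
  have hp' : ‖p‖ ≠ 0 := norm_ne_zero_iff.2 hp
  rw [← hpq, ← smul_sub, norm_smul, mul_pow, norm_sub_sq_real, ← hpq, norm_inv, norm_norm]
  field_simp
  linear_combination -2 * h

theorem sum_norm_inv_smul_sub_inv_smul_eq_sqrt {ι : Type*} {s : Finset ι} {p : ι → E} {x : ι}
    (hx : p x ≠ 0) (hnorm : ∀ y ∈ s, ‖p x‖ = ‖p y‖) {ω : ℝ}
    (h : ∀ y ∈ s, #s * inner ℝ (p x) (p y) = ω * ‖p x‖ ^ 2) :
    ∑ y ∈ s, ‖‖p x‖⁻¹ • p x - ‖p y‖⁻¹ • p y‖ = √(2 * #s * (#s - ω)) := by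
  rw [Finset.sum_eq_sqrt_of_card_mul_sq_eq (t := 2 * (#s - ω)) (fun _ _ => norm_nonneg _)
    fun y hy => mul_norm_inv_smul_sub_inv_smul_sq hx (hnorm y hy) (h y hy)]
  ring_nf

end

namespace LinearMap.IsSymmetric
variable {E : Type*} [NormedAddCommGroup E] [InnerProductSpace ℝ E] {T : E →ₗ[ℝ] E} {θ μ ν : ℝ}

theorem starProjection_eigenspace_eq (hT : T.IsSymmetric)
    [(eigenspace T θ).HasOrthogonalProjection]
    (hcubic : (T - θ • 1) * ((T - μ • 1) * (T - ν • 1)) = 0) (hμ : θ ≠ μ) (hν : θ ≠ ν) (x : E) :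
    (eigenspace T θ).starProjection x = ((θ - μ) * (θ - ν))⁻¹ • ((T - μ • 1) * (T - ν • 1)) x := by
  have hsub : ∀ r : ℝ, (T - r • 1).IsSymmetric := fun r =>
    hT.sub (IsSymmetric.one.smul (conj_trivial r))
  refine (eigenspace T θ).starProjection_eq_of_isSymmetric
    (((hsub μ).mul_of_commute (hsub ν) (.sub_smul_one_sub_smul_one T μ ν)).smul (conj_trivial _))
    (fun y => ?_) (fun w hw => ?_) x
  · have h := LinearMap.congr_fun hcubic y
    rw [mem_eigenspace_iff, LinearMap.smul_apply, map_smul, smul_comm θ]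
    congr 1
    simpa [sub_eq_zero] using h
  · rw [mem_eigenspace_iff] at hw
    have hN : ((T - μ • 1) * (T - ν • 1)) w = ((θ - μ) * (θ - ν)) • w := by
      simp only [Module.End.mul_apply, LinearMap.sub_apply, LinearMap.smul_apply,
        Module.End.one_apply, hw, map_smul, ← sub_smul, smul_smul, mul_comm]
    rw [LinearMap.smul_apply, hN, smul_smul,
      inv_mul_cancel₀ (mul_ne_zero (sub_ne_zero.2 hμ) (sub_ne_zero.2 hν)), one_smul]

end LinearMap.IsSymmetric

namespace Matrix.IsHermitian
variable {n : Type*} [Fintype n] [DecidableEq n] {A : Matrix n n ℝ} {θ μ ν : ℝ}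

theorem inner_starProjection_eigenspace_single (hA : A.IsHermitian)
    (hcubic : (A - θ • 1) * ((A - μ • 1) * (A - ν • 1)) = 0) (hμ : θ ≠ μ) (hν : θ ≠ ν)
    (x y : n) :
    inner ℝ ((eigenspace (toEuclideanLin A) θ).starProjection (EuclideanSpace.single x 1))
      ((eigenspace (toEuclideanLin A) θ).starProjection (EuclideanSpace.single y 1)) =
      ((θ - μ) * (θ - ν))⁻¹ * ((A - μ • 1) * (A - ν • 1)) x y := by
  have hT : (toEuclideanLin A).IsSymmetric := isSymmetric_toEuclideanLin_iff.2 hA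
  have hcubicT := congrArg (toLpLinAlgEquiv 2) hcubic
  simp only [map_mul, map_sub, map_smul, map_one, map_zero] at hcubicT
  rw [Submodule.inner_starProjection_starProjection, hT.starProjection_eigenspace_eq hcubicT hμ hν,
    inner_smul_right, EuclideanSpace.inner_single_left]
  have hN : (toEuclideanLin A - μ • 1) * (toEuclideanLin A - ν • 1) =
      toEuclideanLin ((A - μ • 1) * (A - ν • 1)) := by
    change _ = toLpLinAlgEquiv 2 _
    simp only [map_mul, map_sub, map_smul, map_one]
    rfl
  rw [hN, map_one, one_mul, ofLp_toLpLin, toLin'_apply, PiLp.ofLp_single, mulVec_single_one]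
  rfl

end Matrix.IsHermitian

namespace SimpleGraph
variable {V : Type*} [Fintype V] {G : SimpleGraph V} [DecidableRel G.Adj] {n k a c : ℕ} {θ τ : ℝ}

theorem IsRegularOfDegree.adjMatrix_mul_of_one (h : G.IsRegularOfDegree k) :
    G.adjMatrix ℝ * of 1 = (k : ℝ) • of 1 := by
  ext x y
  simp [h x]

theorem IsRegularOfDegree.sum_eq_zero_of_mulVec_eq_smul (h : G.IsRegularOfDegree k)
    {u : V → ℝ} (hu : G.adjMatrix ℝ *ᵥ u = θ • u) (hθk : θ ≠ k) : ∑ i, u i = 0 := by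
  have hsum : θ * ∑ i, u i = k * ∑ i, u i :=
    calc θ * ∑ i, u i = 1 ⬝ᵥ (G.adjMatrix ℝ *ᵥ u) := by rw [hu]; simp [dotProduct, mul_sum]
      _ = (1 ᵥ* G.adjMatrix ℝ) ⬝ᵥ u := dotProduct_mulVec _ _ _
      _ = k * ∑ i, u i := by simp [dotProduct, h _, mul_sum]
  exact (mul_eq_zero.1 (by linear_combination hsum)).resolve_left (sub_ne_zero.2 hθk)

variable [DecidableEq V]

theorem sum_eq_sum_neighborFinset_add_sum_compl {M : Type*} [AddCommMonoid M] (x : V)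
    {f : V → M} (hx : f x = 0) :
    ∑ y, f y = ∑ y ∈ G.neighborFinset x, f y + ∑ y ∈ Gᶜ.neighborFinset x, f y := by
  rw [← sum_add_sum_compl (G.neighborFinset x), neighborFinset_compl,
    ← sum_sdiff (singleton_subset_iff.2 (by simp : x ∈ (G.neighborFinset x)ᶜ)), sum_singleton,
    hx, add_zero]

theorem IsRegularOfDegree.sum_sum_norm_inv_smul_sub_inv_smul {E : Type*} [NormedAddCommGroup E]
    [InnerProductSpace ℝ E] {k' : ℕ} (hG : G.IsRegularOfDegree k)
    (hG' : Gᶜ.IsRegularOfDegree k') {p : V → E} (hp : ∀ x, p x ≠ 0)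
    (hnorm : ∀ x y, ‖p x‖ = ‖p y‖) {ω ω' : ℝ}
    (hadj : ∀ x y, G.Adj x y → k * inner ℝ (p x) (p y) = ω * ‖p x‖ ^ 2)
    (hcadj : ∀ x y, Gᶜ.Adj x y → k' * inner ℝ (p x) (p y) = ω' * ‖p x‖ ^ 2) :
    ∑ x, ∑ y, ‖‖p x‖⁻¹ • p x - ‖p y‖⁻¹ • p y‖ =
      Fintype.card V * (√(2 * k * (k - ω)) + √(2 * k' * (k' - ω'))) := by
  have hrow : ∀ x, ∑ y, ‖‖p x‖⁻¹ • p x - ‖p y‖⁻¹ • p y‖ =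
      √(2 * k * (k - ω)) + √(2 * k' * (k' - ω')) := by
    intro x
    rw [sum_eq_sum_neighborFinset_add_sum_compl (G := G) x (by simp),
      sum_norm_inv_smul_sub_inv_smul_eq_sqrt (hp x) (fun y _ => hnorm x y) fun y hy => by
        rw [card_neighborFinset_eq_degree, hG x]; exact hadj x y ((mem_neighborFinset ..).1 hy),
      sum_norm_inv_smul_sub_inv_smul_eq_sqrt (hp x) (fun y _ => hnorm x y) fun y hy => by
        rw [card_neighborFinset_eq_degree, hG' x]; exact hcadj x y ((mem_neighborFinset ..).1 hy),
      card_neighborFinset_eq_degree, hG x, card_neighborFinset_eq_degree, hG' x]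
  rw [sum_congr rfl fun x _ => hrow x, sum_const, card_univ, nsmul_eq_mul]

theorem IsSRGWith.adjMatrix_mul_self (h : G.IsSRGWith n k a c) :
    G.adjMatrix ℝ * G.adjMatrix ℝ =
      ((a : ℝ) - c) • G.adjMatrix ℝ + ((k : ℝ) - c) • 1 + (c : ℝ) • of 1 := by
  have hcompl : Gᶜ.adjMatrix ℝ = of 1 - 1 - G.adjMatrix ℝ := by
    rw [← G.one_add_adjMatrix_add_compl_adjMatrix_eq_of_one ℝ,
      G.compl_adjMatrix_eq_adjMatrix_compl ℝ]
    abel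
  rw [← sq, h.matrix_eq, hcompl]
  simp only [← Nat.cast_smul_eq_nsmul ℝ]
  module

theorem IsSRGWith.sq_eq_of_hasEigenvalue (h : G.IsSRGWith n k a c)
    (hθ : HasEigenvalue (toEuclideanLin (G.adjMatrix ℝ)) θ) (hθk : θ ≠ k) :
    θ ^ 2 = (a - c) * θ + (k - c) := by
  obtain ⟨u, hu⟩ := hθ.exists_hasEigenvector
  have hAu : G.adjMatrix ℝ *ᵥ u = θ • u := congrArg WithLp.ofLp (mem_eigenspace_iff.1 hu.1)
  have hJu : (of 1 : Matrix V V ℝ) *ᵥ u = 0 := by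
    ext i
    simpa [mulVec, dotProduct] using h.regular.sum_eq_zero_of_mulVec_eq_smul hAu hθk
  have h2 := congrArg (· *ᵥ u.ofLp) h.adjMatrix_mul_self
  simp only [← mulVec_mulVec, hAu, mulVec_smul, add_mulVec, smul_mulVec, one_mulVec, hJu,
    smul_zero, add_zero, smul_smul, ← add_smul] at h2
  have hu0 : u.ofLp ≠ 0 := by simpa using hu.2
  rw [sq]
  exact smul_left_injective ℝ hu0 h2

theorem IsSRGWith.real_param_eq (h : G.IsSRGWith n k a c) (hn : 0 < n) :
    (k : ℝ) * (k - a - 1) = (n - k - 1) * c := by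
  obtain ⟨x⟩ : Nonempty V := by rw [← Fintype.card_pos_iff, h.card]; exact hn
  have hA1 : G.adjMatrix ℝ *ᵥ 1 = (k : ℝ) • 1 := by ext y; simp [h.regular y]
  have hJ1 : (of 1 : Matrix V V ℝ) *ᵥ 1 = (n : ℝ) • 1 := by ext y; simp [mulVec, dotProduct, h.card]
  have h2 := congrArg (fun M => (M *ᵥ 1) x) h.adjMatrix_mul_self
  simp only [← mulVec_mulVec, add_mulVec, smul_mulVec, one_mulVec, hA1, mulVec_smul, hJ1,
    Pi.add_apply, Pi.smul_apply, Pi.one_apply, smul_eq_mul] at h2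
  linear_combination h2

theorem IsSRGWith.adjMatrix_sub_mul_sub (h : G.IsSRGWith n k a c) (hsum : θ + τ = a - c)
    (hprod : θ * τ = c - k) :
    (G.adjMatrix ℝ - θ • 1) * (G.adjMatrix ℝ - τ • 1) = (c : ℝ) • of 1 := by
  have hk : (k : ℝ) - c = -(θ * τ) := by linarith
  simp only [sub_mul, mul_sub, smul_mul_assoc, mul_smul_comm, one_mul, mul_one,
    h.adjMatrix_mul_self, ← hsum, hk]
  module

theorem IsSRGWith.adjMatrix_cubic_eq_zero (h : G.IsSRGWith n k a c) (hsum : θ + τ = a - c)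
    (hprod : θ * τ = c - k) :
    (G.adjMatrix ℝ - θ • 1) * ((G.adjMatrix ℝ - (k : ℝ) • 1) * (G.adjMatrix ℝ - τ • 1)) = 0 := by
  rw [← mul_assoc, (Commute.sub_smul_one_sub_smul_one _ θ (k : ℝ)).eq, mul_assoc,
    h.adjMatrix_sub_mul_sub hsum hprod, mul_smul_comm, sub_mul, h.regular.adjMatrix_mul_of_one,
    smul_mul_assoc, one_mul, sub_self, smul_zero]

theorem IsSRGWith.ne_of_add_eq_of_mul_eq (h : G.IsSRGWith n k a c) (hc : 1 ≤ c) (hn : k + 1 < n)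
    (hsum : θ + τ = a - c) (hprod : θ * τ = c - k) : θ ≠ τ := by
  rintro rfl
  have hparam := h.real_param_eq (by omega)
  have hn' : (k : ℝ) + 1 < n := by exact_mod_cast hn
  have hc' : (1 : ℝ) ≤ c := by exact_mod_cast hc
  -- a double root would give `k (1 + θ) ^ 2 = k (1 + a - k) = -(n - k - 1) c < 0`
  nlinarith [mul_nonneg k.cast_nonneg (sq_nonneg (1 + θ))]

theorem IsSRGWith.adjMatrix_sub_mul_sub_apply (h : G.IsSRGWith n k a c) (hsum : θ + τ = a - c)
    (hprod : θ * τ = c - k) (x y : V) :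
    ((G.adjMatrix ℝ - (k : ℝ) • 1) * (G.adjMatrix ℝ - τ • 1)) x y =
      if x = y then k * (1 + τ) else if G.Adj x y then θ - k + c else c := by
  have hN : (G.adjMatrix ℝ - (k : ℝ) • 1) * (G.adjMatrix ℝ - τ • 1) =
      (θ - k) • G.adjMatrix ℝ + (k * (1 + τ) - c) • 1 + (c : ℝ) • of 1 := by
    have hk : (k : ℝ) - c = -(θ * τ) := by linarith
    rw [show (k : ℝ) * (1 + τ) - c = k * τ - θ * τ by linear_combination hprod]
    simp only [sub_mul, mul_sub, smul_mul_assoc, mul_smul_comm, one_mul, mul_one,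
      h.adjMatrix_mul_self, ← hsum, hk]
    module
  rw [hN]
  by_cases hxy : x = y
  · subst hxy; simp
  · by_cases hadj : G.Adj x y <;> simp [hxy, hadj]

theorem IsSRGWith.inner_starProjection_single (h : G.IsSRGWith n k a c) (hsum : θ + τ = a - c)
    (hprod : θ * τ = c - k) (hθk : θ ≠ k) (hθτ : θ ≠ τ) (x y : V) :
    inner ℝ
      ((eigenspace (toEuclideanLin (G.adjMatrix ℝ)) θ).starProjection (EuclideanSpace.single x 1))
      ((eigenspace (toEuclideanLin (G.adjMatrix ℝ)) θ).starProjection (EuclideanSpace.single y 1)) =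
      ((θ - k) * (θ - τ))⁻¹ *
        if x = y then k * (1 + τ) else if G.Adj x y then θ - k + c else c := by
  rw [(G.isHermitian_adjMatrix ℝ).inner_starProjection_eigenspace_single
    (h.adjMatrix_cubic_eq_zero hsum hprod) hθk hθτ, h.adjMatrix_sub_mul_sub_apply hsum hprod]

theorem IsSRGWith.norm_starProjection_single_eq (h : G.IsSRGWith n k a c) (hsum : θ + τ = a - c)
    (hprod : θ * τ = c - k) (hθk : θ ≠ k) (hθτ : θ ≠ τ) (x y : V) :
    ‖(eigenspace (toEuclideanLin (G.adjMatrix ℝ)) θ).starProjection (EuclideanSpace.single x 1)‖ =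
      ‖(eigenspace (toEuclideanLin (G.adjMatrix ℝ)) θ).starProjection
        (EuclideanSpace.single y 1)‖ := by
  rw [← sq_eq_sq₀ (norm_nonneg _) (norm_nonneg _), ← real_inner_self_eq_norm_sq,
    ← real_inner_self_eq_norm_sq, h.inner_starProjection_single hsum hprod hθk hθτ,
    h.inner_starProjection_single hsum hprod hθk hθτ, if_pos rfl, if_pos rfl]

theorem IsSRGWith.mul_inner_starProjection_single_of_adj (h : G.IsSRGWith n k a c)
    (hsum : θ + τ = a - c) (hprod : θ * τ = c - k) (hθk : θ ≠ k) (hθτ : θ ≠ τ) {x y : V}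
    (hxy : G.Adj x y) :
    k * inner ℝ
      ((eigenspace (toEuclideanLin (G.adjMatrix ℝ)) θ).starProjection (EuclideanSpace.single x 1))
      ((eigenspace (toEuclideanLin (G.adjMatrix ℝ)) θ).starProjection (EuclideanSpace.single y 1)) =
      θ * ‖(eigenspace (toEuclideanLin (G.adjMatrix ℝ)) θ).starProjection
        (EuclideanSpace.single x 1)‖ ^ 2 := by
  rw [← real_inner_self_eq_norm_sq, h.inner_starProjection_single hsum hprod hθk hθτ,
    h.inner_starProjection_single hsum hprod hθk hθτ, if_pos rfl, if_neg (G.ne_of_adj hxy),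
    if_pos hxy]
  linear_combination (-(((θ - k) * (θ - τ))⁻¹ * k)) * hprod

theorem IsSRGWith.mul_inner_starProjection_single_of_compl_adj (h : G.IsSRGWith n k a c)
    (hn : k < n) (hsum : θ + τ = a - c) (hprod : θ * τ = c - k) (hθk : θ ≠ k) (hθτ : θ ≠ τ)
    {x y : V} (hxy : Gᶜ.Adj x y) :
    ((n - k - 1 : ℕ) : ℝ) * inner ℝ
      ((eigenspace (toEuclideanLin (G.adjMatrix ℝ)) θ).starProjection (EuclideanSpace.single x 1))
      ((eigenspace (toEuclideanLin (G.adjMatrix ℝ)) θ).starProjection (EuclideanSpace.single y 1)) =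
      -(1 + θ) * ‖(eigenspace (toEuclideanLin (G.adjMatrix ℝ)) θ).starProjection
        (EuclideanSpace.single x 1)‖ ^ 2 := by
  rw [compl_adj] at hxy
  rw [← real_inner_self_eq_norm_sq, h.inner_starProjection_single hsum hprod hθk hθτ,
    h.inner_starProjection_single hsum hprod hθk hθτ, if_pos rfl, if_neg hxy.1, if_neg hxy.2,
    Nat.cast_sub (by omega), Nat.cast_sub hn.le]
  push_cast
  linear_combination ((θ - k) * (θ - τ))⁻¹ * (k * hsum + k * hprod - h.real_param_eq (by omega))

end SimpleGraph

theorem srg_embedding_sum_dist (v k a c : ℕ) (hc : 1 ≤ c) (hkv : k < v - 1)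
    (G : SimpleGraph (Fin v)) [DecidableRel G.Adj] (hG : G.IsSRGWith v k a c)
    (θ : ℝ) (hθk : θ ≠ (k : ℝ))
    (hθ : Module.End.HasEigenvalue (Matrix.toEuclideanLin (G.adjMatrix ℝ)) θ)
    (hnz : ∀ x : Fin v,
      ((Submodule.orthogonalProjection
          (Module.End.eigenspace (Matrix.toEuclideanLin (G.adjMatrix ℝ)) θ)
          (EuclideanSpace.single x 1) : EuclideanSpace ℝ (Fin v))) ≠ 0)
    (z : Fin v → EuclideanSpace ℝ (Fin v))
    (hz : ∀ x : Fin v, z x =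
      ‖((Submodule.orthogonalProjection
          (Module.End.eigenspace (Matrix.toEuclideanLin (G.adjMatrix ℝ)) θ)
          (EuclideanSpace.single x 1) : EuclideanSpace ℝ (Fin v)))‖⁻¹ •
        ((Submodule.orthogonalProjection
          (Module.End.eigenspace (Matrix.toEuclideanLin (G.adjMatrix ℝ)) θ)
          (EuclideanSpace.single x 1) : EuclideanSpace ℝ (Fin v)))) :
    ∑ x, ∑ y, ‖z x - z y‖ =
      (v : ℝ) * (Real.sqrt (2 * k * ((k : ℝ) - θ))
        + Real.sqrt (2 * ((v : ℝ) - 1 - k) * ((v : ℝ) + θ - k))) := by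
  set τ : ℝ := a - c - θ
  have hsum : θ + τ = a - c := by ring
  have hprod : θ * τ = c - k := by linear_combination -hG.sq_eq_of_hasEigenvalue hθ hθk
  have hθτ := hG.ne_of_add_eq_of_mul_eq hc (by omega) hsum hprod
  obtain rfl : z = _ := funext hz
  rw [hG.regular.sum_sum_norm_inv_smul_sub_inv_smul hG.compl_is_regular hnz
    (hG.norm_starProjection_single_eq hsum hprod hθk hθτ)
    (fun _ _ => hG.mul_inner_starProjection_single_of_adj hsum hprod hθk hθτ)
    (fun _ _ => hG.mul_inner_starProjection_single_of_compl_adj (by omega) hsum hprod hθk hθτ),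
    Fintype.card_fin, Nat.cast_sub (by omega), Nat.cast_sub (by omega)]
  ring_nf
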